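/- arXiv:1710.08983 — 3 statements merged into one kernel-verified Lean document; each statement's English description precedes it below -/
import Mathlib

section
/- For natural numbers n and i with 1 ≤ i ≤ n, the integer i · C(n, i) equals n · C(n-1, i-1), where C denotes the binomial coefficient; consequently, if n = (k-1)!·m and 1 ≤ i ≤ k-1, then m divides the binomial coefficient C(n, i). -/
theorem stmt_2 (m k i n : ℕ) (hn : n = (k - 1).factorial * m)
    (hi1 : 1 ≤ i) (hik : i ≤ k - 1) :
    i * n.choose i = n * (n - 1).choose (i - 1) ∧ m ∣ n.choose i := by
  have hid : i ∣ (k - 1).factorial := Nat.dvd_factorial hi1 hik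
  obtain ⟨t, ht⟩ := hid
  have key : i * n.choose i = n * (n - 1).choose (i - 1) := by
    rcases Nat.eq_zero_or_pos n with h0 | hpos
    · subst h0; simp [Nat.choose_eq_zero_of_lt (by omega : (0:ℕ) < i)]
    · obtain ⟨n', rfl⟩ := Nat.exists_eq_succ_of_ne_zero hpos.ne'
      obtain ⟨i', rfl⟩ := Nat.exists_eq_succ_of_ne_zero (by omega : i ≠ 0)
      simpa [Nat.succ_sub_one, mul_comm] using (Nat.add_one_mul_choose_eq n' i').symm
  refine ⟨key, ?_⟩
  have h2 : i * n.choose i = i * (t * m * (n - 1).choose (i - 1)) := by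
    rw [key, hn, ht]; ring
  have h3 := Nat.eq_of_mul_eq_mul_left (by omega) h2
  exact ⟨t * (n - 1).choose (i - 1), by rw [h3]; ring⟩
end

section
/- Let A ∈ GL(k, ℤ) be a matrix of infinite order (in the group GL(k,ℤ)) such that every complex eigenvalue of A is a root of unity. Then for every m ∈ ℕ with m ≥ 1 there exists n ≥ 1 such that the quotient group ℤ^k / (A^n - I)ℤ^k contains an element of order m. -/
/-!
Some power `B = A ^ n₀` is unipotent: all eigenvalues of `A` are `n₀`-th roots of unity, so by
Cayley–Hamilton `N = B - 1` is nilpotent, and `N ≠ 0` because `A` has infinite order. Let `N ^ (j + 1)`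
be the last nonzero power of `N` and `y` a column of it with `y i ≠ 0`. As `B` is invertible modulo
`q = m * y i`, some `B ^ t` is `≡ 1 mod q`, so `C = B ^ t - 1` maps `ℤ^k` into `q ℤ^k`; on the other
hand `C * N ^ j = t • N ^ (j + 1)` by the binomial theorem, so `t • y` lies in the image of `C`.
Hence the class of `y` in `ℤ^k / C ℤ^k` has finite order, divisible by `m` since `d • y ∈ C ℤ^k`
forces `q ∣ d * y i`; a multiple of this class has order exactly `m`.
-/

open Matrix Polynomial

theorem Finset.exists_pos_forall_pow_eq_one {G : Type*} [Monoid G] (s : Finset G)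
    (hs : ∀ z ∈ s, IsOfFinOrder z) : ∃ n, 0 < n ∧ ∀ z ∈ s, z ^ n = 1 :=
  ⟨∏ z ∈ s, orderOf z, Finset.prod_pos fun _ hz => (hs _ hz).orderOf_pos,
    fun _ hz => orderOf_dvd_iff_pow_eq_one.mp (Finset.dvd_prod_of_mem _ hz)⟩

theorem IsNilpotent.exists_pow_succ_ne_zero_and_pow_add_two_eq_zero {R : Type*}
    [MonoidWithZero R] {x : R} (hx : IsNilpotent x) (hx0 : x ≠ 0) :
    ∃ j, x ^ (j + 1) ≠ 0 ∧ x ^ (j + 2) = 0 := by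
  have : Nontrivial R := nontrivial_of_ne x 0 hx0
  have hpos : 0 < nilpotencyClass x := pos_nilpotencyClass_iff.mpr hx
  have hne_one : nilpotencyClass x ≠ 1 := nilpotencyClass_eq_one.not.mpr hx0
  obtain ⟨hzero, hne⟩ := nilpotencyClass_eq_succ_iff.mp
    (show nilpotencyClass x = nilpotencyClass x - 2 + 1 + 1 by omega)
  exact ⟨_, hne, hzero⟩

theorem one_add_pow_mul_pow_of_pow_eq_zero {R : Type*} [Semiring R] {N : R} {j : ℕ}
    (hN : N ^ (j + 2) = 0) (t : ℕ) : (1 + N) ^ t * N ^ j = N ^ j + t • N ^ (j + 1) := by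
  induction t with
  | zero => simp
  | succ t ih =>
    rw [pow_succ', mul_assoc, ih, mul_add, add_mul, add_mul, one_mul, one_mul, mul_smul_comm,
      ← pow_succ', ← pow_succ', hN, smul_zero, add_zero, succ_nsmul]
    abel

theorem exists_addOrderOf_eq_of_nsmul_eq_zero {G : Type*} [AddMonoid G] {x : G} {t m : ℕ}
    (ht : 0 < t) (hx : t • x = 0) (hm : ∀ d : ℕ, d • x = 0 → m ∣ d) :
    ∃ z : G, addOrderOf z = m := by
  have hpos : 0 < addOrderOf x :=
    addOrderOf_pos_iff.mpr (isOfFinAddOrder_iff_nsmul_eq_zero.mpr ⟨t, ht, hx⟩)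
  obtain ⟨s, hs⟩ := hm _ (addOrderOf_nsmul_eq_zero x)
  have hs0 : s ≠ 0 := by rintro rfl; omega
  refine ⟨s • x, ?_⟩
  rw [addOrderOf_nsmul_of_dvd hs0 (Dvd.intro_left _ hs.symm), hs,
    Nat.mul_div_cancel _ (Nat.pos_of_ne_zero hs0)]

namespace Matrix

variable {ι : Type*} [Fintype ι]

section Unipotent

variable [DecidableEq ι] {K : Type*} [Field K] [IsAlgClosed K]

theorem charpoly_dvd_pow_of_forall_isRoot (M : Matrix ι ι K) {q : K[X]}
    (hq : ∀ z ∈ M.charpoly.roots, q.IsRoot z) : M.charpoly ∣ q ^ Fintype.card ι := by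
  have hsplit := IsAlgClosed.splits M.charpoly
  rw [hsplit.eq_prod_roots_of_monic M.charpoly_monic, ← M.charpoly_natDegree_eq_dim,
    hsplit.natDegree_eq_card_roots, ← Multiset.prod_replicate, ← Multiset.map_const']
  exact Multiset.prod_dvd_prod_of_dvd _ _ fun z hz => dvd_iff_isRoot.mpr (hq z hz)

theorem isNilpotent_aeval_of_forall_isRoot (M : Matrix ι ι K) {q : K[X]}
    (hq : ∀ z ∈ M.charpoly.roots, q.IsRoot z) : IsNilpotent (aeval M q) := by
  obtain ⟨r, hr⟩ := M.charpoly_dvd_pow_of_forall_isRoot hq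
  refine ⟨Fintype.card ι, ?_⟩
  rw [← map_pow, hr, map_mul, aeval_self_charpoly, zero_mul]

theorem exists_isNilpotent_pow_sub_one (M : Matrix ι ι K)
    (hM : ∀ z, M.charpoly.IsRoot z → IsOfFinOrder z) :
    ∃ n, 0 < n ∧ IsNilpotent (M ^ n - 1) := by
  classical
  obtain ⟨n, hn, hpow⟩ := M.charpoly.roots.toFinset.exists_pos_forall_pow_eq_one
    fun z hz => hM z (isRoot_of_mem_roots (Multiset.mem_toFinset.mp hz))
  have hroots : ∀ z ∈ M.charpoly.roots, (X ^ n - 1 : K[X]).IsRoot z := fun z hz => by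
    simp [hpow z (Multiset.mem_toFinset.mpr hz)]
  refine ⟨n, hn, ?_⟩
  simpa only [map_sub, map_pow, aeval_X, map_one] using
    M.isNilpotent_aeval_of_forall_isRoot hroots

theorem exists_isNilpotent_pow_sub_one_of_injective {R : Type*} [CommRing R] (f : R →+* K)
    (hf : Function.Injective f) (A : Matrix ι ι R)
    (hA : ∀ z, (A.map f).charpoly.IsRoot z → IsOfFinOrder z) :
    ∃ n, 0 < n ∧ IsNilpotent (A ^ n - 1) := by
  obtain ⟨n, hn, hnil⟩ := (A.map f).exists_isNilpotent_pow_sub_one hA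
  refine ⟨n, hn, (IsNilpotent.map_iff (f := f.mapMatrix) (map_injective hf)).mp ?_⟩
  simpa only [map_sub, map_pow, map_one, RingHom.mapMatrix_apply] using hnil

end Unipotent

theorem exists_pow_sub_one_entries_dvd [DecidableEq ι] {B : Matrix ι ι ℤ} (hB : IsUnit B)
    {q : ℤ} (hq : q ≠ 0) : ∃ t, 0 < t ∧ ∀ a b, q ∣ (B ^ t - 1) a b := by
  have : NeZero q.natAbs := ⟨Int.natAbs_ne_zero.mpr hq⟩
  let f := (Int.castRingHom (ZMod q.natAbs)).mapMatrix (m := ι)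
  obtain ⟨t, ht, hpow⟩ := (isOfFinOrder_of_finite (hB.map f).unit).exists_pow_eq_one
  refine ⟨t, ht, fun a b => Int.natAbs_dvd.mp ?_⟩
  have hzero : f (B ^ t - 1) = 0 := by
    rw [map_sub, map_pow, map_one, ← IsUnit.unit_spec (hB.map f), ← Units.val_pow_eq_pow_val,
      hpow, Units.val_one, sub_self]
  exact (ZMod.intCast_zmod_eq_zero_iff_dvd _ _).mp (congrFun (congrFun hzero a) b)

theorem dvd_of_mulVec_eq_smul {C : Matrix ι ι ℤ} {w y : ι → ℤ} {i : ι} {m d : ℕ}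
    (hC : ∀ a b, (m * y i : ℤ) ∣ C a b) (hyi : y i ≠ 0) (hw : C *ᵥ w = d • y) : m ∣ d := by
  have hdvd : (m * y i : ℤ) ∣ (C *ᵥ w) i := Finset.dvd_sum fun b _ => (hC i b).mul_right _
  rw [hw, Pi.smul_apply, nsmul_eq_mul] at hdvd
  exact Int.natCast_dvd_natCast.mp ((mul_dvd_mul_iff_right hyi).mp hdvd)

end Matrix

theorem stmt_3_general (k : ℕ) (A : Matrix (Fin k) (Fin k) ℤ)
    (hinf : ∀ n : ℕ, 1 ≤ n → A ^ n ≠ 1)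
    (heig : ∀ z : ℂ, ((A.map (Int.cast : ℤ → ℂ)).charpoly).IsRoot z →
      ∃ d : ℕ, 1 ≤ d ∧ z ^ d = 1)
    (m : ℕ) (hm : 1 ≤ m) :
    ∃ n : ℕ, 1 ≤ n ∧
      ∃ x : (Fin k → ℤ) ⧸ LinearMap.range (Matrix.toLin' (A ^ n - 1)),
        addOrderOf x = m := by
  obtain ⟨n₀, hn₀, hnil⟩ := exists_isNilpotent_pow_sub_one_of_injective (Int.castRingHom ℂ)
    Int.cast_injective A fun z hz => isOfFinOrder_iff_pow_eq_one.mpr (heig z hz)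
  set N := A ^ n₀ - 1 with hN
  obtain ⟨j, hj1, hj2⟩ :=
    hnil.exists_pow_succ_ne_zero_and_pow_add_two_eq_zero (sub_ne_zero.mpr (hinf n₀ hn₀))
  obtain ⟨i, l, hil⟩ : ∃ i l, (N ^ (j + 1)) i l ≠ 0 := by
    by_contra! h
    exact hj1 (Matrix.ext h)
  set y := N ^ (j + 1) *ᵥ Pi.single l 1
  have hyi : y i ≠ 0 := by simpa [y] using hil
  -- The modulus is `m * y i` rather than `m` so that `y` need not be primitive.
  obtain ⟨t, ht, hdvd⟩ := exists_pow_sub_one_entries_dvd hnil.isUnit_one_add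
    (q := m * y i) (mul_ne_zero (by omega) hyi)
  refine ⟨n₀ * t, Nat.mul_pos hn₀ ht, ?_⟩
  rw [pow_mul, show A ^ n₀ = 1 + N by rw [hN]; abel]
  have hw : ((1 + N) ^ t - 1) *ᵥ (N ^ j *ᵥ Pi.single l 1) = t • y := by
    rw [mulVec_mulVec, sub_mul, one_add_pow_mul_pow_of_pow_eq_zero hj2, one_mul,
      add_sub_cancel_left, smul_mulVec]
  refine exists_addOrderOf_eq_of_nsmul_eq_zero (x := Submodule.Quotient.mk y) ht ?_ fun d hd => ?_
  · rw [← Submodule.Quotient.mk_smul, Submodule.Quotient.mk_eq_zero]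
    exact ⟨_, hw⟩
  · rw [← Submodule.Quotient.mk_smul, Submodule.Quotient.mk_eq_zero] at hd
    obtain ⟨w, hw'⟩ := hd
    exact dvd_of_mulVec_eq_smul hdvd hyi hw'

theorem stmt_3 (k : ℕ) (A : Matrix (Fin k) (Fin k) ℤ) (hA : IsUnit A)
    (hinf : ∀ n : ℕ, 1 ≤ n → A ^ n ≠ 1)
    (heig : ∀ z : ℂ, ((A.map (Int.cast : ℤ → ℂ)).charpoly).IsRoot z →
      ∃ d : ℕ, 1 ≤ d ∧ z ^ d = 1)
    (m : ℕ) (hm : 1 ≤ m) :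
    ∃ n : ℕ, 1 ≤ n ∧
      ∃ x : (Fin k → ℤ) ⧸ LinearMap.range (Matrix.toLin' (A ^ n - 1)),
        addOrderOf x = m :=
  stmt_3_general k A hinf heig m hm
end

section
/- Kronecker's theorem: let p(t) be a monic polynomial with integer coefficients, all of whose complex roots are nonzero and have absolute value at most 1. Then every root of p is a root of unity. -/
/-!
Since `p` is monic with all roots in the closed unit disc, its Mahler measure
`‖lc p‖ * ∏ max 1 ‖α‖` equals one. For an integer polynomial of Mahler measure one, a root `z`
is an algebraic integer all of whose conjugates lie in the unit disc, and so do all its powers;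
there are only finitely many such algebraic integers of bounded degree (their minimal
polynomials have bounded integer coefficients), so `z ^ a = z ^ b` for some `a ≠ b`, and
`z ≠ 0` makes `z` a root of unity.
-/

namespace Polynomial

theorem Monic.mahlerMeasure_eq_one_of_forall_mem_roots_norm_le_one {p : ℂ[X]} (hp : p.Monic)
    (hroots : ∀ z ∈ p.roots, ‖z‖ ≤ 1) : p.mahlerMeasure = 1 := by
  rw [mahlerMeasure_eq_leadingCoeff_mul_prod_roots, hp.leadingCoeff, norm_one, one_mul]
  refine Multiset.prod_eq_one fun x hx => ?_
  obtain ⟨z, hz, rfl⟩ := Multiset.mem_map.mp hx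
  exact max_eq_left (hroots z hz)

end Polynomial

open Polynomial

theorem stmt_15 (p : Polynomial ℤ) (hmonic : p.Monic)
    (hroots : ∀ z : ℂ, Polynomial.aeval z p = 0 → z ≠ 0 ∧ ‖z‖ ≤ 1) :
    ∀ z : ℂ, Polynomial.aeval z p = 0 → ∃ d : ℕ, 1 ≤ d ∧ z ^ d = 1 := by
  intro z hz
  have hmahler : (p.map (Int.castRingHom ℂ)).mahlerMeasure = 1 := by
    refine (hmonic.map _).mahlerMeasure_eq_one_of_forall_mem_roots_norm_le_one fun w hw => ?_
    exact (hroots w ((mem_aroots.mp hw).2)).2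
  exact pow_eq_one_of_mahlerMeasure_eq_one hmahler (hroots z hz).1
    (mem_aroots.mpr ⟨hmonic.ne_zero, hz⟩)
end
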